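/- arXiv:2601.19828 — 3 statements merged into one kernel-verified Lean document; each statement's English description precedes it below -/
import Mathlib

section
/- Let q ∈ ℕ, let s be an integer with 1 ≤ s ≤ q + 1, let C_P > 0, and let Z be a real Banach space. There exists a constant C > 0, depending only on q, s, and C_P, with the following property: for all real numbers a < b with τ = b − a, all r ∈ [1,∞], every linear operator P from C([a,b];Z) into the space of restrictions to [a,b] of Z-valued polynomials of degree at most q satisfying (i) Pp = p on [a,b] for every Z-valued polynomial p of degree at most q, and (ii) ‖Pg‖_{L^∞((a,b);Z)} ≤ C_P ‖g‖_{L^∞((a,b);Z)} for every g ∈ C([a,b];Z), and every s-times continuously differentiable function v : [a,b] → Z, one has ‖(v − Pv)'‖_{L^r((a,b);Z)} ≤ C τ^{s−1} ‖v^{(s)}‖_{L^r((a,b);Z)}, where (v − Pv)' denotes the derivative of v − Pv. -/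
/-!
Let `p` be the Taylor polynomial of `v` of degree `s - 1` at `a` and `w = v - p`. Since `P` is
additive and fixes `p`, we have `v - P v = w - P w` on `[a, b]`. Differentiating a Taylor remainder
gives the Taylor remainder of the derivative, so `‖w'‖_{Lʳ} ≤ τ^{s-1} ‖v^{(s)}‖_{Lʳ}` and
`‖w‖_{L^∞} ≤ τ^{s-1} ‖v^{(s)}‖_{L¹}`. Stability of `P` bounds the polynomial `P w` in the same way,
and Markov's inequality `‖(P w)'‖_{L^∞} ≤ K_q τ⁻¹ ‖P w‖_{L^∞}` (obtained on `[0, 1]` from the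
inverse Vandermonde matrix and then rescaled) together with Hölder's inequality bounds
`‖(P w)'‖_{Lʳ}` by `K_q C_P τ^{s-1} ‖v^{(s)}‖_{Lʳ}`.
-/

open MeasureTheory Set ENNReal

/-- A `Z`-valued polynomial of degree at most `q`:
`t ↦ ∑_{i=0}^{q} t^i • c i` with coefficients `c i ∈ Z`. -/
def IsPolyDegLE (Z : Type*) [AddCommGroup Z] [Module ℝ Z] (q : ℕ) (f : ℝ → Z) : Prop :=
  ∃ c : Fin (q + 1) → Z, ∀ t : ℝ, f t = ∑ i : Fin (q + 1), t ^ (i : ℕ) • c i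

section PolyDegLE

variable {Z : Type*} {q : ℕ} {p : ℝ → Z}

section Module

variable [AddCommGroup Z] [Module ℝ Z]

open Polynomial in
lemma isPolyDegLE_sum_eval_smul {ι : Type*} (S : Finset ι) (P : ι → ℝ[X])
    (hP : ∀ i ∈ S, (P i).natDegree ≤ q) (d : ι → Z) :
    IsPolyDegLE Z q (fun t => ∑ i ∈ S, (P i).eval t • d i) := by
  refine ⟨fun j => ∑ i ∈ S, (P i).coeff j • d i, fun t => ?_⟩
  have hexp : ∀ i ∈ S, (P i).eval t = ∑ j : Fin (q + 1), (P i).coeff j * t ^ (j : ℕ) := by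
    intro i hi
    rw [Fin.sum_univ_eq_sum_range (fun j => (P i).coeff j * t ^ j),
      eval_eq_sum_range' (Nat.lt_succ_of_le (hP i hi))]
  simp_rw [Finset.smul_sum, smul_smul]
  rw [Finset.sum_comm]
  refine Finset.sum_congr rfl fun i hi => ?_
  rw [hexp i hi, Finset.sum_smul]
  simp_rw [mul_comm]

open Polynomial in
lemma IsPolyDegLE.comp_affine (hp : IsPolyDegLE Z q p) (α β : ℝ) :
    IsPolyDegLE Z q (fun t => p (α + β * t)) := by
  obtain ⟨c, hc⟩ := hp
  have hdeg : ∀ i : Fin (q + 1), ((C β * X + C α) ^ (i : ℕ)).natDegree ≤ q := fun i =>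
    (natDegree_pow_le_of_le _ natDegree_linear_le).trans (by simpa using i.is_le)
  convert isPolyDegLE_sum_eval_smul Finset.univ _ (fun i _ => hdeg i) c using 1
  ext t
  simp only [hc, eval_pow, eval_add, eval_mul, eval_C, eval_X, add_comm (β * t)]

end Module

variable [NormedAddCommGroup Z] [NormedSpace ℝ Z]

lemma IsPolyDegLE.contDiff (hp : IsPolyDegLE Z q p) {n : WithTop ℕ∞} : ContDiff ℝ n p := by
  obtain ⟨c, hc⟩ := hp
  rw [funext hc]
  fun_prop

lemma IsPolyDegLE.continuous (hp : IsPolyDegLE Z q p) : Continuous p :=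
  (hp.contDiff (n := 0)).continuous

open Polynomial in
lemma isPolyDegLE_taylorWithinEval {n : ℕ} (hn : n ≤ q) (v : ℝ → Z) (s : Set ℝ) (x₀ : ℝ) :
    IsPolyDegLE Z q (taylorWithinEval v n s x₀) := by
  have hdeg : ∀ k ∈ Finset.range (n + 1),
      (C (k.factorial : ℝ)⁻¹ * (X - C x₀) ^ k).natDegree ≤ q := fun k hk =>
    (natDegree_C_mul_le _ _).trans <| (natDegree_pow_le_of_le _ (natDegree_X_sub_C_le _)).trans <|
      by simpa [Nat.lt_succ_iff] using (Finset.mem_range.1 hk).trans_le (Nat.succ_le_succ hn)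
  convert isPolyDegLE_sum_eval_smul _ _ hdeg (fun k => iteratedDerivWithin k v s x₀) using 1
  ext x
  simp [taylor_within_apply]

end PolyDegLE

/-- The coefficients of `x ↦ ∑ i, x ^ i • e i` are recovered from its values at the nodes
`k / (q + 1)` by the inverse Vandermonde matrix, so their norms are at most `coeffBound q` times
its sup norm on `[0, 1]`. -/
noncomputable def coeffBound (q : ℕ) : ℝ :=
  ∑ j, ∑ k, |(Matrix.vandermonde fun k : Fin (q + 1) => (k : ℝ) / (q + 1))⁻¹ j k|

noncomputable def markovConst (q : ℕ) : ℝ :=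
  (q + 1) * q * coeffBound q

lemma markovConst_nonneg (q : ℕ) : 0 ≤ markovConst q := by
  unfold markovConst coeffBound
  positivity

section Markov

variable {Z : Type*} [NormedAddCommGroup Z] [NormedSpace ℝ Z] {q : ℕ}

lemma norm_coeff_le_coeffBound {e : Fin (q + 1) → Z} {S : ℝ}
    (hS : ∀ x ∈ Icc (0 : ℝ) 1, ‖∑ i : Fin (q + 1), x ^ (i : ℕ) • e i‖ ≤ S) (j : Fin (q + 1)) :
    ‖e j‖ ≤ coeffBound q * S := by
  set u : Fin (q + 1) → ℝ := fun k => k / (q + 1)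
  have hu_inj : Function.Injective u := fun k l hkl => by
    simpa [u, div_left_inj' (by positivity : (q : ℝ) + 1 ≠ 0), Fin.ext_iff] using hkl
  have hu_mem : ∀ k, u k ∈ Icc (0 : ℝ) 1 := fun k =>
    ⟨by positivity, (div_le_one (by positivity)).2 (by exact_mod_cast k.is_le.trans q.le_succ)⟩
  set B := (Matrix.vandermonde u)⁻¹
  have hB : B * Matrix.vandermonde u = 1 :=
    Matrix.nonsing_inv_mul _ (isUnit_iff_ne_zero.2 (Matrix.det_vandermonde_ne_zero_iff.2 hu_inj))
  have hS0 : 0 ≤ S := (norm_nonneg _).trans (hS 0 ⟨le_rfl, zero_le_one⟩)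
  have he : e j = ∑ k, B j k • ∑ i : Fin (q + 1), u k ^ (i : ℕ) • e i := by
    calc e j = ∑ i, (B * Matrix.vandermonde u) j i • e i := by simp [hB, Matrix.one_apply]
      _ = _ := by
        simp_rw [Matrix.mul_apply, Matrix.vandermonde_apply, Finset.sum_smul, Finset.smul_sum,
          smul_smul]
        exact Finset.sum_comm
  calc ‖e j‖ ≤ ∑ k, |B j k| * S := by
        rw [he]
        refine (norm_sum_le _ _).trans (Finset.sum_le_sum fun k _ => ?_)
        rw [norm_smul, Real.norm_eq_abs]
        exact mul_le_mul_of_nonneg_left (hS _ (hu_mem k)) (abs_nonneg _)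
    _ ≤ coeffBound q * S := by
        rw [← Finset.sum_mul]
        exact mul_le_mul_of_nonneg_right (Finset.single_le_sum (f := fun j => ∑ k, |B j k|)
          (fun _ _ => by positivity) (Finset.mem_univ j)) hS0

lemma IsPolyDegLE.norm_deriv_le {p : ℝ → Z} (hp : IsPolyDegLE Z q p) {a b S t : ℝ} (hab : a < b)
    (hS : ∀ x ∈ Icc a b, ‖p x‖ ≤ S) (ht : t ∈ Icc a b) :
    ‖deriv p t‖ ≤ markovConst q / (b - a) * S := by
  have hτ : 0 < b - a := sub_pos.2 hab
  obtain ⟨e, he⟩ := hp.comp_affine a (b - a)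
  have he_le : ∀ i, ‖e i‖ ≤ coeffBound q * S := norm_coeff_le_coeffBound fun x hx => by
    rw [← he x]
    exact hS _ ⟨by nlinarith [hx.1], by nlinarith [hx.2]⟩
  have hp_eq : p = fun t => ∑ i : Fin (q + 1), ((t - a) / (b - a)) ^ (i : ℕ) • e i := by
    ext t
    rw [← he]
    congr 1
    field_simp
    ring
  set y := (t - a) / (b - a)
  have hy : y ∈ Icc (0 : ℝ) 1 :=
    ⟨div_nonneg (by linarith [ht.1]) hτ.le, (div_le_one hτ).2 (by linarith [ht.2])⟩
  have hderiv : HasDerivAt p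
      (∑ i : Fin (q + 1), ((i : ℕ) * y ^ ((i : ℕ) - 1) * (1 / (b - a))) • e i) t := by
    rw [hp_eq]
    exact HasDerivAt.fun_sum fun i _ =>
      ((((hasDerivAt_id t).sub_const a).div_const (b - a)).fun_pow _).smul_const _
  have hcoeff_le : ∀ i : Fin (q + 1),
      |(i : ℕ) * y ^ ((i : ℕ) - 1) * (1 / (b - a))| ≤ q / (b - a) := by
    intro i
    rw [abs_of_nonneg (by have := hy.1; positivity), ← div_eq_mul_one_div]
    gcongr
    calc (i : ℕ) * y ^ ((i : ℕ) - 1) ≤ (i : ℕ) * 1 := by gcongr; exact pow_le_one₀ hy.1 hy.2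
      _ ≤ q := by rw [mul_one]; exact_mod_cast i.is_le
  rw [hderiv.deriv]
  calc _ ≤ ∑ _i : Fin (q + 1), q / (b - a) * (coeffBound q * S) := by
        refine (norm_sum_le _ _).trans (Finset.sum_le_sum fun i _ => ?_)
        rw [norm_smul, Real.norm_eq_abs]
        exact mul_le_mul (hcoeff_le i) (he_le i) (norm_nonneg _) (by positivity)
    _ = markovConst q / (b - a) * S := by
        simp only [Finset.sum_const, Finset.card_univ, Fintype.card_fin, nsmul_eq_mul, markovConst]
        push_cast
        ring

end Markov

section Taylor

variable {E : Type*} [NormedAddCommGroup E] [NormedSpace ℝ E] {a b : ℝ} {v : ℝ → E}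

lemma hasDerivWithinAt_taylor_remainder_succ {s : Set ℝ} {x₀ x : ℝ} (n : ℕ)
    (hv : DifferentiableWithinAt ℝ v s x) :
    HasDerivWithinAt (fun y => v y - taylorWithinEval v (n + 1) s x₀ y)
      (derivWithin v s x - taylorWithinEval (derivWithin v s) n s x₀ x) s x :=
  hv.hasDerivWithinAt.sub (hasDerivAt_taylorWithinEval_succ v n).hasDerivWithinAt

lemma norm_sub_le_integral_norm_derivWithin (hab : a < b) (hv : ContDiffOn ℝ 1 v (Icc a b))
    {t : ℝ} (ht : t ∈ Icc a b) :
    ‖v t - v a‖ ≤ ∫ u in a..b, ‖derivWithin v (Icc a b) u‖ := by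
  have hcont : ContinuousOn (fun u => ‖derivWithin v (Icc a b) u‖) (Icc a b) :=
    (hv.continuousOn_derivWithin (uniqueDiffOn_Icc hab) le_rfl).norm
  have hsub : Icc a t ⊆ Icc a b := Icc_subset_Icc_right ht.2
  calc ‖v t - v a‖ ≤ ∫ u in a..t, ‖derivWithin v (Icc a b) u‖ := by
        refine norm_sub_le_integral_of_norm_deriv_le_of_le ht.1 (hv.continuousOn.mono hsub)
          ((hv.differentiableOn one_ne_zero).mono (Ioo_subset_Icc_self.trans hsub))
          (ae_of_all _ fun u hu => ?_) ((hcont.mono hsub).intervalIntegrable_of_Icc ht.1)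
        rw [derivWithin_of_mem_nhds (Icc_mem_nhds hu.1 (hu.2.trans_le ht.2))]
    _ ≤ ∫ u in a..b, ‖derivWithin v (Icc a b) u‖ :=
        intervalIntegral.integral_mono_interval le_rfl ht.1 ht.2
          (ae_of_all _ fun _ => norm_nonneg _) (hcont.intervalIntegrable_of_Icc hab.le)

/-- The derivative of the remainder of order `n + 1` is the remainder of order `n` of `v'`, so
each order costs a factor `b - a`. -/
lemma norm_taylor_remainder_le (hab : a < b) (n : ℕ) (hv : ContDiffOn ℝ (n + 1) v (Icc a b))
    {t : ℝ} (ht : t ∈ Icc a b) :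
    ‖v t - taylorWithinEval v n (Icc a b) a t‖ ≤
      (b - a) ^ n * ∫ u in a..b, ‖iteratedDerivWithin (n + 1) v (Icc a b) u‖ := by
  induction n generalizing v t with
  | zero =>
    simpa [taylor_within_zero_eval] using
      norm_sub_le_integral_norm_derivWithin hab (by simpa using hv) ht
  | succ n ih =>
    have hdv : ContDiffOn ℝ (n + 1) (derivWithin v (Icc a b)) (Icc a b) :=
      hv.derivWithin (uniqueDiffOn_Icc hab) (by norm_cast)
    set L := ∫ u in a..b, ‖iteratedDerivWithin (n + 1 + 1) v (Icc a b) u‖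
    have hL : 0 ≤ L := intervalIntegral.integral_nonneg hab.le fun _ _ => norm_nonneg _
    have hdv_le : ∀ x ∈ Ico a b,
        ‖derivWithin v (Icc a b) x - taylorWithinEval (derivWithin v (Icc a b)) n (Icc a b) a x‖
          ≤ (b - a) ^ n * L := fun x hx => by
      simpa only [L, iteratedDerivWithin_succ'] using ih hdv (Ico_subset_Icc_self hx)
    have h := norm_image_sub_le_of_norm_deriv_le_segment'
      (fun x hx => hasDerivWithinAt_taylor_remainder_succ n
        ((hv.differentiableOn (by simp)) x hx)) hdv_le t ht
    rw [taylorWithinEval_self, sub_self, sub_zero] at h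
    calc _ ≤ (b - a) ^ n * L * (t - a) := h
      _ ≤ (b - a) ^ n * L * (b - a) := by
          gcongr
          linarith [ht.2]
      _ = (b - a) ^ (n + 1) * L := by ring

end Taylor

section Lp

variable {E : Type*} [NormedAddCommGroup E] {a b : ℝ}

lemma norm_le_of_ae_restrict_Ioo {f : ℝ → E} {S : ℝ} (hab : a < b)
    (hf : ContinuousOn f (Icc a b)) (h : ∀ᵐ t ∂volume.restrict (Ioo a b), ‖f t‖ ≤ S) :
    ∀ t ∈ Icc a b, ‖f t‖ ≤ S := by
  have hmin : EqOn (fun t => ‖f t‖) (fun t => min ‖f t‖ S) (Icc a b) := by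
    refine Measure.eqOn_Icc_of_ae_eq volume hab.ne ?_ hf.norm (hf.norm.inf continuousOn_const)
    rw [Measure.restrict_congr_set Ioo_ae_eq_Icc.symm]
    filter_upwards [h] with t ht
    exact (min_eq_left ht).symm
  exact fun t ht => (hmin ht).trans_le (min_le_right _ _)

lemma norm_le_of_eLpNorm_top_le {f : ℝ → E} {S : ℝ} (hab : a < b) (hS : 0 ≤ S)
    (hf : ContinuousOn f (Icc a b))
    (h : eLpNorm f ⊤ (volume.restrict (Ioo a b)) ≤ ENNReal.ofReal S) :
    ∀ t ∈ Icc a b, ‖f t‖ ≤ S := by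
  rw [eLpNorm_exponent_top] at h
  refine norm_le_of_ae_restrict_Ioo hab hf ?_
  filter_upwards [enorm_ae_le_eLpNormEssSup f (volume.restrict (Ioo a b))] with t ht
  rw [← ENNReal.ofReal_le_ofReal_iff hS, ofReal_norm]
  exact ht.trans h

lemma eLpNorm_top_le_of_forall_norm_le {f : ℝ → E} {S : ℝ}
    (h : ∀ t ∈ Ioo a b, ‖f t‖ ≤ S) :
    eLpNorm f ⊤ (volume.restrict (Ioo a b)) ≤ ENNReal.ofReal S := by
  simpa using eLpNorm_le_of_ae_bound (p := ⊤) (ae_restrict_of_forall_mem measurableSet_Ioo h)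

/-- Hölder twice: `‖f‖_{Lʳ} ≤ (b - a)^{1/r} ‖f‖_{L^∞}` and
`‖V‖_{L¹} ≤ (b - a)^{1 - 1/r} ‖V‖_{Lʳ}`. -/
lemma eLpNorm_le_of_norm_le_mul_integral {f V : ℝ → E} {c : ℝ} {r : ℝ≥0∞} (hab : a < b)
    (hr : 1 ≤ r) (hc : 0 ≤ c) (hV : IntegrableOn V (Ioo a b))
    (h : ∀ t ∈ Ioo a b, ‖f t‖ ≤ c * ∫ u in a..b, ‖V u‖) :
    eLpNorm f r (volume.restrict (Ioo a b)) ≤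
      ENNReal.ofReal (c * (b - a)) * eLpNorm V r (volume.restrict (Ioo a b)) := by
  set μ := volume.restrict (Ioo a b)
  have hμ : μ univ = ENNReal.ofReal (b - a) := by simp [μ, Real.volume_Ioo]
  set T := ENNReal.ofReal (b - a)
  have hT : T ^ r.toReal⁻¹ * T ^ (1 - r.toReal⁻¹) = T := by
    rw [← ENNReal.rpow_add _ _ (by simpa [T] using hab) ENNReal.ofReal_ne_top, add_sub_cancel,
      ENNReal.rpow_one]
  have hL : ENNReal.ofReal (∫ u in a..b, ‖V u‖) = eLpNorm V 1 μ := by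
    rw [intervalIntegral.integral_of_le hab.le, integral_Ioc_eq_integral_Ioo,
      ofReal_integral_norm_eq_lintegral_enorm hV, eLpNorm_one_eq_lintegral_enorm]
  have hHolder : eLpNorm V 1 μ ≤ eLpNorm V r μ * T ^ (1 - r.toReal⁻¹) := by
    simpa [hμ] using eLpNorm_le_eLpNorm_mul_rpow_measure_univ hr hV.aestronglyMeasurable
  calc eLpNorm f r μ ≤ T ^ r.toReal⁻¹ * ENNReal.ofReal (c * ∫ u in a..b, ‖V u‖) :=
        hμ ▸ eLpNorm_le_of_ae_bound (ae_restrict_of_forall_mem measurableSet_Ioo h)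
    _ ≤ T ^ r.toReal⁻¹ * (ENNReal.ofReal c * (eLpNorm V r μ * T ^ (1 - r.toReal⁻¹))) := by
        rw [ENNReal.ofReal_mul hc, hL]
        gcongr
    _ = ENNReal.ofReal c * eLpNorm V r μ * (T ^ r.toReal⁻¹ * T ^ (1 - r.toReal⁻¹)) := by ring
    _ = ENNReal.ofReal (c * (b - a)) * eLpNorm V r μ := by
        rw [hT, ENNReal.ofReal_mul hc]
        ring

end Lp

section DerivLp

variable {E : Type*} [NormedAddCommGroup E] [NormedSpace ℝ E] {a b : ℝ} {r : ℝ≥0∞}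

lemma eLpNorm_derivWithin_sub_le {f g : ℝ → E} (hab : a < b) (hr : 1 ≤ r)
    (hf : ContDiffOn ℝ 1 f (Icc a b)) (hg : ContDiffOn ℝ 1 g (Icc a b)) :
    eLpNorm (derivWithin (fun x => f x - g x) (Icc a b)) r (volume.restrict (Ioo a b)) ≤
      eLpNorm (derivWithin f (Icc a b)) r (volume.restrict (Ioo a b)) +
        eLpNorm (derivWithin g (Icc a b)) r (volume.restrict (Ioo a b)) := by
  have hmeas : ∀ {h : ℝ → E}, ContDiffOn ℝ 1 h (Icc a b) →
      AEStronglyMeasurable (derivWithin h (Icc a b)) (volume.restrict (Ioo a b)) := fun hh =>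
    ((hh.continuousOn_derivWithin (uniqueDiffOn_Icc hab) le_rfl).mono
      Ioo_subset_Icc_self).aestronglyMeasurable measurableSet_Ioo
  refine (eLpNorm_congr_ae (ae_restrict_of_forall_mem measurableSet_Ioo fun t ht => ?_)).trans_le
    (eLpNorm_sub_le (hmeas hf) (hmeas hg) hr)
  have ht' : t ∈ Icc a b := Ioo_subset_Icc_self ht
  exact derivWithin_fun_sub ((hf.differentiableOn one_ne_zero) t ht')
    ((hg.differentiableOn one_ne_zero) t ht')

variable {v : ℝ → E}

lemma eLpNorm_derivWithin_taylor_remainder_le (hab : a < b) (hr : 1 ≤ r) (m : ℕ)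
    (hv : ContDiffOn ℝ (m + 1) v (Icc a b)) :
    eLpNorm (derivWithin (fun x => v x - taylorWithinEval v m (Icc a b) a x) (Icc a b)) r
        (volume.restrict (Ioo a b)) ≤
      ENNReal.ofReal ((b - a) ^ m) *
        eLpNorm (iteratedDerivWithin (m + 1) v (Icc a b)) r (volume.restrict (Ioo a b)) := by
  cases m with
  | zero => simp [taylor_within_zero_eval, iteratedDerivWithin_one]
  | succ k =>
    have hdv : ContDiffOn ℝ (k + 1) (derivWithin v (Icc a b)) (Icc a b) :=
      hv.derivWithin (uniqueDiffOn_Icc hab) (by norm_cast)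
    have hV : IntegrableOn (iteratedDerivWithin (k + 1) (derivWithin v (Icc a b)) (Icc a b))
        (Ioo a b) :=
      ((hdv.continuousOn_iteratedDerivWithin le_rfl (uniqueDiffOn_Icc hab)).integrableOn_Icc
        ).mono_set Ioo_subset_Icc_self
    rw [iteratedDerivWithin_succ', pow_succ]
    refine eLpNorm_le_of_norm_le_mul_integral hab hr (by positivity) hV fun t ht => ?_
    have ht' : t ∈ Icc a b := Ioo_subset_Icc_self ht
    rw [(hasDerivWithinAt_taylor_remainder_succ k ((hv.differentiableOn (by simp)) t ht')
      ).derivWithin (uniqueDiffOn_Icc hab t ht')]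
    exact norm_taylor_remainder_le hab k hdv ht'

end DerivLp

section Projector

variable {E : Type*} [NormedAddCommGroup E] {a b : ℝ}

lemma norm_le_of_eqOn_of_eLpNorm_top_le {F f g : ℝ → E} {C S : ℝ} (hab : a < b) (hC : 0 ≤ C)
    (hS : 0 ≤ S) (hf : ContinuousOn f (Icc a b)) (hFf : EqOn F f (Icc a b))
    (hg : ∀ t ∈ Ioo a b, ‖g t‖ ≤ S)
    (hFg : eLpNorm F ⊤ (volume.restrict (Ioo a b)) ≤
      ENNReal.ofReal C * eLpNorm g ⊤ (volume.restrict (Ioo a b))) :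
    ∀ t ∈ Icc a b, ‖f t‖ ≤ C * S := by
  refine norm_le_of_eLpNorm_top_le hab (by positivity) hf ?_
  calc eLpNorm f ⊤ (volume.restrict (Ioo a b))
      = eLpNorm F ⊤ (volume.restrict (Ioo a b)) :=
        eLpNorm_congr_ae (ae_restrict_of_forall_mem measurableSet_Ioo fun t ht =>
          (hFf (Ioo_subset_Icc_self ht)).symm)
    _ ≤ ENNReal.ofReal C * ENNReal.ofReal S :=
        hFg.trans (by gcongr; exact eLpNorm_top_le_of_forall_norm_le hg)
    _ = ENNReal.ofReal (C * S) := (ENNReal.ofReal_mul hC).symm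

variable {P : (ℝ → E) → ℝ → E} {s : Set ℝ}

lemma eqOn_sub_map_sub {v p : ℝ → E}
    (h_add : ∀ f g : ℝ → E, ContinuousOn f s → ContinuousOn g s →
      ∀ t ∈ s, P (f + g) t = P f t + P g t)
    (hPp : ∀ t ∈ s, P p t = p t) (hv : ContinuousOn v s) (hp : ContinuousOn p s) :
    EqOn (v - P v) (v - p - P (v - p)) s := fun t ht => by
  have hsplit := h_add (v - p) p (hv.sub hp) hp t ht
  rw [sub_add_cancel, hPp t ht] at hsplit
  simp only [Pi.sub_apply, hsplit]
  abel

variable [NormedSpace ℝ E] {q : ℕ}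

lemma IsPolyDegLE.eLpNorm_derivWithin_le {p V : ℝ → E} {c : ℝ} {r : ℝ≥0∞}
    (hp : IsPolyDegLE E q p) (hab : a < b) (hr : 1 ≤ r) (hc : 0 ≤ c)
    (hV : IntegrableOn V (Ioo a b)) (h : ∀ t ∈ Icc a b, ‖p t‖ ≤ c * ∫ u in a..b, ‖V u‖) :
    eLpNorm (derivWithin p (Icc a b)) r (volume.restrict (Ioo a b)) ≤
      ENNReal.ofReal (markovConst q * c) * eLpNorm V r (volume.restrict (Ioo a b)) := by
  have hτ : 0 < b - a := sub_pos.2 hab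
  have hK := markovConst_nonneg q
  convert eLpNorm_le_of_norm_le_mul_integral (c := markovConst q / (b - a) * c) hab hr
    (by positivity) hV fun t ht => ?_ using 3
  · field_simp
  · have ht' : t ∈ Icc a b := Ioo_subset_Icc_self ht
    rw [((hp.contDiff (n := 1)).differentiable one_ne_zero t).derivWithin
      (uniqueDiffOn_Icc hab t ht'), mul_assoc]
    exact hp.norm_deriv_le hab h ht'

end Projector

theorem generic_projector_deriv_estimate_general (q s : ℕ) (hs1 : 1 ≤ s) (hs2 : s ≤ q + 1)
    (C_P : ℝ) (hCP : 0 < C_P)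
    (Z : Type*) [NormedAddCommGroup Z] [NormedSpace ℝ Z] :
    ∃ C : ℝ, 0 < C ∧
      ∀ (a b τ : ℝ), a < b → τ = b - a →
        ∀ r : ℝ≥0∞, 1 ≤ r →
          ∀ P : (ℝ → Z) → (ℝ → Z),
            (∀ f g : ℝ → Z, ContinuousOn f (Icc a b) → ContinuousOn g (Icc a b) →
              ∀ t ∈ Icc a b, P (f + g) t = P f t + P g t) →
            (∀ (c : ℝ) (f : ℝ → Z), ContinuousOn f (Icc a b) →
              ∀ t ∈ Icc a b, P (c • f) t = c • P f t) →
            (∀ f : ℝ → Z, ContinuousOn f (Icc a b) →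
              ∃ pf : ℝ → Z, IsPolyDegLE Z q pf ∧ ∀ t ∈ Icc a b, P f t = pf t) →
            (∀ pf : ℝ → Z, IsPolyDegLE Z q pf → ∀ t ∈ Icc a b, P pf t = pf t) →
            (∀ g : ℝ → Z, ContinuousOn g (Icc a b) →
              eLpNorm (P g) ⊤ (volume.restrict (Ioo a b)) ≤
                ENNReal.ofReal C_P * eLpNorm g ⊤ (volume.restrict (Ioo a b))) →
            ∀ v : ℝ → Z, ContDiffOn ℝ s v (Icc a b) →
              eLpNorm (derivWithin (fun u => v u - P v u) (Icc a b)) r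
                  (volume.restrict (Ioo a b)) ≤
                ENNReal.ofReal (C * τ ^ (s - 1)) *
                  eLpNorm (iteratedDerivWithin s v (Icc a b)) r (volume.restrict (Ioo a b)) := by
  have hK := markovConst_nonneg q
  refine ⟨1 + markovConst q * C_P, by positivity, ?_⟩
  rintro a b τ hab rfl r hr P h_add - h_poly h_repro h_stab v hv
  obtain ⟨m, rfl⟩ : ∃ m, s = m + 1 := ⟨s - 1, by omega⟩
  set I := Icc a b
  set μ := volume.restrict (Ioo a b)
  set V := iteratedDerivWithin (m + 1) v I
  have hV : IntegrableOn V (Ioo a b) :=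
    ((hv.continuousOn_iteratedDerivWithin le_rfl (uniqueDiffOn_Icc hab)).integrableOn_Icc
      ).mono_set Ioo_subset_Icc_self
  have hL : 0 ≤ ∫ u in a..b, ‖V u‖ :=
    intervalIntegral.integral_nonneg hab.le fun _ _ => norm_nonneg _
  -- `P` fixes the Taylor polynomial `p` of degree `m ≤ q`, so `v - P v = w - P w` for `w = v - p`
  set p := taylorWithinEval v m I a
  have hp : IsPolyDegLE Z q p := isPolyDegLE_taylorWithinEval (by omega) v I a
  have hw : ContDiffOn ℝ (m + 1) (v - p) I := hv.sub hp.contDiff.contDiffOn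
  obtain ⟨pw, hpw, hPw⟩ := h_poly _ hw.continuousOn
  have hpw_le : ∀ t ∈ I, ‖pw t‖ ≤ C_P * (b - a) ^ m * ∫ u in a..b, ‖V u‖ := by
    simpa only [mul_assoc] using norm_le_of_eqOn_of_eLpNorm_top_le hab hCP.le (by positivity)
      hpw.continuous.continuousOn hPw
      (fun t ht => norm_taylor_remainder_le hab m hv (Ioo_subset_Icc_self ht))
      (h_stab _ hw.continuousOn)
  have hPv : EqOn (v - P v) (v - p - pw) I := fun t ht =>
    (eqOn_sub_map_sub h_add (h_repro p hp) hv.continuousOn hp.continuous.continuousOn ht).trans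
      (by simp [hPw t ht])
  calc eLpNorm (derivWithin (v - P v) I) r μ = eLpNorm (derivWithin (v - p - pw) I) r μ :=
        eLpNorm_congr_ae (ae_restrict_of_forall_mem measurableSet_Ioo fun t ht =>
          derivWithin_congr hPv (hPv (Ioo_subset_Icc_self ht)))
    _ ≤ eLpNorm (derivWithin (v - p) I) r μ + eLpNorm (derivWithin pw I) r μ :=
        eLpNorm_derivWithin_sub_le hab hr (hw.of_le (by simp)) hpw.contDiff.contDiffOn
    _ ≤ ENNReal.ofReal ((b - a) ^ m) * eLpNorm V r μ +
          ENNReal.ofReal (markovConst q * (C_P * (b - a) ^ m)) * eLpNorm V r μ :=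
        add_le_add (eLpNorm_derivWithin_taylor_remainder_le hab hr m hv)
          (hpw.eLpNorm_derivWithin_le hab hr (by positivity) hV hpw_le)
    _ = _ := by
        rw [← add_mul, ← ENNReal.ofReal_add (by positivity) (by positivity), Nat.add_sub_cancel]
        ring_nf

/-- **Derivative estimate for a generic projector.** Any linear projection `P` onto polynomials
of degree at most `q` in time that reproduces such polynomials on `[a,b]` and is stable in the
`L^∞((a,b);Z)` norm with constant `C_P` satisfies, for every `s`-times continuously
differentiable `v` and every `r ∈ [1,∞]`,
`‖(v − Pv)'‖_{L^r((a,b);Z)} ≤ C τ^{s−1} ‖v^{(s)}‖_{L^r((a,b);Z)}`,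
with a constant `C` depending only on `q`, `s`, and `C_P`. -/
theorem generic_projector_deriv_estimate (q s : ℕ) (hs1 : 1 ≤ s) (hs2 : s ≤ q + 1)
    (C_P : ℝ) (hCP : 0 < C_P)
    (Z : Type*) [NormedAddCommGroup Z] [NormedSpace ℝ Z] [CompleteSpace Z] :
    ∃ C : ℝ, 0 < C ∧
      ∀ (a b τ : ℝ), a < b → τ = b - a →
        ∀ r : ℝ≥0∞, 1 ≤ r →
          ∀ P : (ℝ → Z) → (ℝ → Z),
            (∀ f g : ℝ → Z, ContinuousOn f (Icc a b) → ContinuousOn g (Icc a b) →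
              ∀ t ∈ Icc a b, P (f + g) t = P f t + P g t) →
            (∀ (c : ℝ) (f : ℝ → Z), ContinuousOn f (Icc a b) →
              ∀ t ∈ Icc a b, P (c • f) t = c • P f t) →
            (∀ f : ℝ → Z, ContinuousOn f (Icc a b) →
              ∃ pf : ℝ → Z, IsPolyDegLE Z q pf ∧ ∀ t ∈ Icc a b, P f t = pf t) →
            (∀ pf : ℝ → Z, IsPolyDegLE Z q pf → ∀ t ∈ Icc a b, P pf t = pf t) →
            (∀ g : ℝ → Z, ContinuousOn g (Icc a b) →
              eLpNorm (P g) ⊤ (volume.restrict (Ioo a b)) ≤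
                ENNReal.ofReal C_P * eLpNorm g ⊤ (volume.restrict (Ioo a b))) →
            ∀ v : ℝ → Z, ContDiffOn ℝ s v (Icc a b) →
              eLpNorm (derivWithin (fun u => v u - P v u) (Icc a b)) r
                  (volume.restrict (Ioo a b)) ≤
                ENNReal.ofReal (C * τ ^ (s - 1)) *
                  eLpNorm (iteratedDerivWithin s v (Icc a b)) r (volume.restrict (Ioo a b)) :=
  generic_projector_deriv_estimate_general q s hs1 hs2 C_P hCP Z
end

section
/- Let H be a real Hilbert space, q ∈ ℕ, r ∈ [1,∞], and a < b with τ = b − a. Let L_0, …, L_q : ℝ → ℝ be continuous functions satisfying ∫_a^b L_i(t) L_j(t) dt = (τ/(2i+1)) δ_{ij} for all 0 ≤ i, j ≤ q, and |L_i(t)| ≤ 1 for all t ∈ [a,b] and all i. For v ∈ L^r((a,b);H) define Πv(t) := Σ_{i=0}^{q} ((2i+1)/τ) (∫_a^b v(s) L_i(s) ds) L_i(t). Then ‖Πv‖_{L^r((a,b);H)} ≤ (q+1)² ‖v‖_{L^r((a,b);H)}. -/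
/-!
Each summand of `Πv` is a rank-one operator `v ↦ ((2i+1)/τ) ⟨v, L_i⟩ L_i`. Since `|L_i| ≤ 1`,
Hölder gives `‖⟨v, L_i⟩‖ ≤ ‖v‖_{L¹} ≤ τ^{1 - 1/r} ‖v‖_{L^r}` and `‖L_i‖_{L^r} ≤ τ^{1/r}`, so the
summand has `L^r`-norm at most `(2i+1) ‖v‖_{L^r}`. The triangle inequality and
`∑_{i ≤ q} (2i+1) = (q+1)²` finish the proof.
-/

open MeasureTheory Set ENNReal

theorem Finset.sum_range_two_mul_add_one {R : Type*} [CommSemiring R] (n : ℕ) :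
    ∑ i ∈ Finset.range n, (2 * (i : R) + 1) = (n : R) ^ 2 := by
  induction n with
  | zero => simp
  | succ n ih => rw [Finset.sum_range_succ, ih]; push_cast; ring

section RankOne

variable {α E : Type*} [MeasurableSpace α] [NormedAddCommGroup E] [NormedSpace ℝ E]
  {μ : Measure α} {r : ℝ≥0∞}

theorem enorm_smul_le_of_norm_le_one {c : ℝ} (hc : ‖c‖ ≤ 1) (x : E) : ‖c • x‖ₑ ≤ ‖x‖ₑ := by
  rw [enorm_smul]
  exact mul_le_of_le_one_left' (ofReal_norm c ▸ ofReal_le_one.mpr hc)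

theorem enorm_integral_smul_le_eLpNorm_mul (hr : 1 ≤ r) {g : α → ℝ}
    (hg : ∀ᵐ s ∂μ, ‖g s‖ ≤ 1) {v : α → E} (hv : AEStronglyMeasurable v μ) :
    ‖∫ s, g s • v s ∂μ‖ₑ ≤ eLpNorm v r μ * μ univ ^ (1 - r.toReal⁻¹) :=
  calc ‖∫ s, g s • v s ∂μ‖ₑ ≤ ∫⁻ s, ‖g s • v s‖ₑ ∂μ := enorm_integral_le_lintegral_enorm _
    _ ≤ ∫⁻ s, ‖v s‖ₑ ∂μ := lintegral_mono_ae <| hg.mono fun s hs =>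
        enorm_smul_le_of_norm_le_one hs _
    _ = eLpNorm v 1 μ := eLpNorm_one_eq_lintegral_enorm.symm
    _ ≤ eLpNorm v r μ * μ univ ^ (1 - r.toReal⁻¹) := by
        simpa using eLpNorm_le_eLpNorm_mul_rpow_measure_univ hr hv

theorem eLpNorm_smul_integral_smul_le (hr : 1 ≤ r) {g h : α → ℝ}
    (hg : ∀ᵐ s ∂μ, ‖g s‖ ≤ 1) (hh : ∀ᵐ t ∂μ, ‖h t‖ ≤ 1) {v : α → E}
    (hv : AEStronglyMeasurable v μ) :
    eLpNorm (fun t => h t • ∫ s, g s • v s ∂μ) r μ ≤ μ univ * eLpNorm v r μ := by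
  have hexp : 0 ≤ 1 - r.toReal⁻¹ := by
    rcases eq_or_ne r ∞ with rfl | hr_top
    · simp
    · exact sub_nonneg.mpr (inv_le_one_of_one_le₀ (by simpa using ENNReal.toReal_mono hr_top hr))
  calc eLpNorm (fun t => h t • ∫ s, g s • v s ∂μ) r μ
      ≤ ‖∫ s, g s • v s ∂μ‖ₑ * μ univ ^ r.toReal⁻¹ :=
        eLpNorm_le_of_ae_enorm_bound (hh.mono fun t ht => enorm_smul_le_of_norm_le_one ht _)
    _ ≤ eLpNorm v r μ * μ univ ^ (1 - r.toReal⁻¹) * μ univ ^ r.toReal⁻¹ := by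
        gcongr; exact enorm_integral_smul_le_eLpNorm_mul hr hg hv
    _ = μ univ * eLpNorm v r μ := by
        rw [mul_assoc, ← ENNReal.rpow_add_of_nonneg _ _ hexp (by positivity)]
        simp [mul_comm]

end RankOne

theorem eLpNorm_div_smul_intervalIntegral_smul_le {E : Type*} [NormedAddCommGroup E]
    [NormedSpace ℝ E] {r : ℝ≥0∞} (hr : 1 ≤ r) {a b : ℝ} (hab : a < b) {c : ℝ} (hc : 0 ≤ c)
    {g h : ℝ → ℝ} (hg : ∀ s ∈ Ioo a b, |g s| ≤ 1) (hh : ∀ t ∈ Ioo a b, |h t| ≤ 1) {v : ℝ → E}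
    (hv : AEStronglyMeasurable v (volume.restrict (Ioo a b))) :
    eLpNorm (fun t => (c / (b - a) * h t) • ∫ s in a..b, g s • v s) r
        (volume.restrict (Ioo a b)) ≤
      ENNReal.ofReal c * eLpNorm v r (volume.restrict (Ioo a b)) := by
  have hba : 0 < b - a := sub_pos.mpr hab
  have hμ : volume.restrict (Ioo a b) univ = ENNReal.ofReal (b - a) := by simp
  have ae_of_Ioo {f : ℝ → ℝ} (hf : ∀ t ∈ Ioo a b, |f t| ≤ 1) :
      ∀ᵐ t ∂volume.restrict (Ioo a b), ‖f t‖ ≤ 1 :=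
    (ae_restrict_mem measurableSet_Ioo).mono hf
  calc eLpNorm (fun t => (c / (b - a) * h t) • ∫ s in a..b, g s • v s) r _
      = ‖c / (b - a)‖ₑ *
          eLpNorm (fun t => h t • ∫ s, g s • v s ∂volume.restrict (Ioo a b)) r _ := by
        rw [intervalIntegral.integral_of_le hab.le, integral_Ioc_eq_integral_Ioo,
          ← eLpNorm_const_smul]
        simp only [mul_smul]; rfl
    _ ≤ ‖c / (b - a)‖ₑ * (ENNReal.ofReal (b - a) * eLpNorm v r _) := by
        gcongr
        exact hμ ▸ eLpNorm_smul_integral_smul_le hr (ae_of_Ioo hg) (ae_of_Ioo hh) hv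
    _ = ENNReal.ofReal c * eLpNorm v r _ := by
        rw [← mul_assoc, ← ofReal_norm, ← ENNReal.ofReal_mul (norm_nonneg _),
          Real.norm_of_nonneg (by positivity), div_mul_cancel₀ _ hba.ne']

theorem legendre_projection_stability_general (H : Type*) [NormedAddCommGroup H]
    [InnerProductSpace ℝ H]
    (q : ℕ) (r : ℝ≥0∞) (hr : 1 ≤ r) (a b τ : ℝ) (hab : a < b) (hτ : τ = b - a)
    (L : Fin (q + 1) → ℝ → ℝ) (hLcont : ∀ i, Continuous (L i))
    (hbd : ∀ i : Fin (q + 1), ∀ t ∈ Icc a b, |L i t| ≤ 1)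
    (v : ℝ → H) (hv : MemLp v r (volume.restrict (Ioo a b))) :
    eLpNorm
        (fun t => ∑ i : Fin (q + 1),
          ((2 * (i : ℝ) + 1) / τ * L i t) • (∫ s in a..b, L i s • v s))
        r (volume.restrict (Ioo a b)) ≤
      ENNReal.ofReal (((q : ℝ) + 1) ^ 2) * eLpNorm v r (volume.restrict (Ioo a b)) := by
  subst hτ
  have hL : ∀ i, ∀ t ∈ Ioo a b, |L i t| ≤ 1 := fun i t ht => hbd i t (Ioo_subset_Icc_self ht)
  have hmeas : ∀ i : Fin (q + 1), AEStronglyMeasurable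
      (fun t => ((2 * (i : ℝ) + 1) / (b - a) * L i t) • ∫ s in a..b, L i s • v s)
      (volume.restrict (Ioo a b)) := fun i =>
    ((continuous_const.mul (hLcont i)).smul continuous_const).aestronglyMeasurable
  calc _ ≤ ∑ i : Fin (q + 1), eLpNorm
          (fun t => ((2 * (i : ℝ) + 1) / (b - a) * L i t) • ∫ s in a..b, L i s • v s) r _ := by
        rw [← Finset.sum_fn]
        exact eLpNorm_sum_le (fun i _ => hmeas i) hr
    _ ≤ ∑ i : Fin (q + 1), ENNReal.ofReal (2 * (i : ℝ) + 1) * eLpNorm v r _ :=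
        Finset.sum_le_sum fun i _ => eLpNorm_div_smul_intervalIntegral_smul_le hr hab
          (by positivity) (hL i) (hL i) hv.1
    _ = ENNReal.ofReal (((q : ℝ) + 1) ^ 2) * eLpNorm v r _ := by
        rw [← Finset.sum_mul, ← ENNReal.ofReal_sum_of_nonneg fun i _ => by positivity,
          Fin.sum_univ_eq_sum_range (fun i => 2 * (i : ℝ) + 1), Finset.sum_range_two_mul_add_one]
        push_cast; rfl

/-- **Stability of the `L²(0,T)`-orthogonal projection (Legendre expansion form).**
Given rescaled Legendre polynomials `L_0, …, L_q` on `(a,b)` (characterized by their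
orthogonality relations and the uniform bound `|L_i| ≤ 1` on `[a,b]`), the projection
`Πv(t) = ∑_{i=0}^{q} ((2i+1)/τ) (∫_a^b v(s) L_i(s) ds) L_i(t)` satisfies
`‖Πv‖_{L^r((a,b);H)} ≤ (q+1)² ‖v‖_{L^r((a,b);H)}` for every `r ∈ [1,∞]`. -/
theorem legendre_projection_stability (H : Type*) [NormedAddCommGroup H]
    [InnerProductSpace ℝ H] [CompleteSpace H]
    (q : ℕ) (r : ℝ≥0∞) (hr : 1 ≤ r) (a b τ : ℝ) (hab : a < b) (hτ : τ = b - a)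
    (L : Fin (q + 1) → ℝ → ℝ) (hLcont : ∀ i, Continuous (L i))
    (horth : ∀ i j : Fin (q + 1),
      (∫ t in a..b, L i t * L j t) = if i = j then τ / (2 * (i : ℝ) + 1) else 0)
    (hbd : ∀ i : Fin (q + 1), ∀ t ∈ Icc a b, |L i t| ≤ 1)
    (v : ℝ → H) (hv : MemLp v r (volume.restrict (Ioo a b))) :
    eLpNorm
        (fun t => ∑ i : Fin (q + 1),
          ((2 * (i : ℝ) + 1) / τ * L i t) • (∫ s in a..b, L i s • v s))
        r (volume.restrict (Ioo a b)) ≤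
      ENNReal.ofReal (((q : ℝ) + 1) ^ 2) * eLpNorm v r (volume.restrict (Ioo a b)) :=
  legendre_projection_stability_general H q r hr a b τ hab hτ L hLcont hbd v hv
end

section
/- Let q ≥ 2 and s be integers with 2 ≤ s ≤ q + 1, let C_Q > 0, and let H be a real Hilbert space. There exists a constant C > 0, depending only on q, s, and C_Q, with the following property: for all a < b with τ = b − a, all r ∈ [1,∞], every linear operator Q from C([a,b];H) into the space of restrictions to [a,b] of H-valued polynomials of degree at most q − 1 satisfying (i) Qp = p on [a,b] for every H-valued polynomial p of degree at most q − 1 and (ii) ‖Qg‖_{L^∞((a,b);H)} ≤ C_Q ‖g‖_{L^∞((a,b);H)} for every g ∈ C([a,b];H), and every s-times continuously differentiable v : [a,b] → H, the function Pv(t) := v(a) + ∫_a^t (Qv')(σ) dσ satisfies ‖v − Pv‖_{L^r((a,b);H)} ≤ C τ^s ‖v^{(s)}‖_{L^r((a,b);H)} and ‖v' − (Pv)'‖_{L^r((a,b);H)} ≤ C τ^{s−1} ‖v^{(s)}‖_{L^r((a,b);H)}. -/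
/-!
Write `s = n + 2`. The Taylor polynomial `T` of degree `n` of `v'` at `a` has degree `< q`, so
`Q` reproduces it and `v' - Qv' = (v' - T) - Q(v' - T)`; by stability
`‖v' - Qv'‖_∞ ≤ (1 + C_Q) ‖v' - T‖_∞`, and the integral form of the Taylor remainder bounds
`‖v' - T‖_∞` by `τⁿ/n! ‖v⁽ˢ⁾‖_{L¹}`. Since `(Pv)' = Qv'` and `v - Pv` is the primitive of
`v' - Qv'` vanishing at `a`, also `‖v - Pv‖_∞ ≤ τ ‖v' - Qv'‖_∞`. Finally Hölder's inequality on an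
interval of length `τ`, `‖E‖_{Lʳ} ≤ τ^{1/r} ‖E‖_∞` and `‖D‖_{L¹} ≤ τ^{1-1/r} ‖D‖_{Lʳ}`, turns
these `L^∞`–`L¹` bounds into the `Lʳ` estimates.
-/

open MeasureTheory Set ENNReal

/-- An `H`-valued polynomial of degree at most `n - 1` (i.e. with `n` coefficients). -/
def IsPolyDegLT (H : Type*) [AddCommGroup H] [Module ℝ H] (n : ℕ) (f : ℝ → H) : Prop :=
  ∃ c : Fin n → H, ∀ t : ℝ, f t = ∑ i : Fin n, t ^ (i : ℕ) • c i

open Polynomial Filter Topology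
open scoped Nat

section Polynomials

variable {H : Type*} [AddCommGroup H] [Module ℝ H] {q : ℕ}

theorem isPolyDegLT_zero : IsPolyDegLT H q 0 :=
  ⟨0, fun t => by simp⟩

theorem IsPolyDegLT.add {f g : ℝ → H} (hf : IsPolyDegLT H q f) (hg : IsPolyDegLT H q g) :
    IsPolyDegLT H q (f + g) := by
  obtain ⟨c, hc⟩ := hf
  obtain ⟨d, hd⟩ := hg
  exact ⟨c + d, fun t => by simp [hc, hd, Finset.sum_add_distrib]⟩

theorem isPolyDegLT_sum {ι : Type*} (s : Finset ι) {f : ι → ℝ → H}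
    (hf : ∀ i ∈ s, IsPolyDegLT H q (f i)) : IsPolyDegLT H q (∑ i ∈ s, f i) :=
  Finset.sum_induction f (IsPolyDegLT H q) (fun _ _ => IsPolyDegLT.add) isPolyDegLT_zero hf

theorem isPolyDegLT_eval_smul {p : ℝ[X]} (hp : p.natDegree < q) (c : H) :
    IsPolyDegLT H q (fun t => p.eval t • c) := by
  refine ⟨fun i => p.coeff i • c, fun t => ?_⟩
  simp only [eval_eq_sum_range' hp, Finset.sum_smul,
    ← Fin.sum_univ_eq_sum_range (fun i => (p.coeff i * t ^ i) • c)]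
  simp only [smul_smul, mul_comm]

theorem isPolyDegLT_taylorWithinEval {E : Type*} [NormedAddCommGroup E] [NormedSpace ℝ E]
    {n : ℕ} (hn : n < q) (f : ℝ → E) (s : Set ℝ) (x₀ : ℝ) :
    IsPolyDegLT E q (taylorWithinEval f n s x₀) := by
  have hT : taylorWithinEval f n s x₀ = ∑ k ∈ Finset.range (n + 1),
      fun x => (C (k ! : ℝ)⁻¹ * (X - C x₀) ^ k).eval x • iteratedDerivWithin k f s x₀ := by
    ext x
    simp [taylor_within_apply]
  rw [hT]
  refine isPolyDegLT_sum _ fun k hk => isPolyDegLT_eval_smul ?_ _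
  have hkn := Finset.mem_range.1 hk
  refine lt_of_le_of_lt ?_ (by omega : k < q)
  compute_degree

end Polynomials

theorem IsPolyDegLT.continuous {H : Type*} [NormedAddCommGroup H] [NormedSpace ℝ H] {q : ℕ}
    {f : ℝ → H} (hf : IsPolyDegLT H q f) : Continuous f := by
  obtain ⟨c, hc⟩ := hf
  rw [funext hc]
  fun_prop

section Taylor

variable {E : Type*} [NormedAddCommGroup E] [NormedSpace ℝ E]

theorem iteratedDerivWithin_congr_set {f : ℝ → E} {s t : Set ℝ} {x : ℝ} (h : s =ᶠ[𝓝 x] t)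
    (n : ℕ) : iteratedDerivWithin n f s x = iteratedDerivWithin n f t x := by
  simp only [iteratedDerivWithin, iteratedFDerivWithin_congr_set h]

theorem taylorWithinEval_congr_set {f : ℝ → E} {s t : Set ℝ} {x₀ : ℝ} (h : s =ᶠ[𝓝 x₀] t)
    (n : ℕ) : taylorWithinEval f n s x₀ = taylorWithinEval f n t x₀ := by
  ext x
  simp only [taylor_within_apply, iteratedDerivWithin_congr_set h]

theorem Icc_eventuallyEq_Icc_left {a b c : ℝ} (hb : a < b) (hc : a < c) :
    Icc a b =ᶠ[𝓝 a] Icc a c := by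
  filter_upwards [Iio_mem_nhds hb, Iio_mem_nhds hc] with y (hyb : y < b) (hyc : y < c)
  change (y ∈ Icc a b) = (y ∈ Icc a c)
  simp [hyb.le, hyc.le]

variable [CompleteSpace E]

theorem enorm_sub_taylorWithinEval_le {f : ℝ → E} {a b : ℝ} {n : ℕ}
    (hf : ContDiffOn ℝ (n + 1) f (Icc a b)) {x : ℝ} (hx : x ∈ Icc a b) :
    ‖f x - taylorWithinEval f n (Icc a b) a x‖ₑ ≤ ENNReal.ofReal ((b - a) ^ n / n !) *
      eLpNorm (iteratedDerivWithin (n + 1) f (Icc a b)) 1 (volume.restrict (Ioo a b)) := by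
  rcases hx.1.eq_or_lt with rfl | hax
  · simp
  have hab : a < b := hax.trans_le hx.2
  have hsub : uIcc a x ⊆ Icc a b := by rw [uIcc_of_le hax.le]; exact Icc_subset_Icc_right hx.2
  -- Mathlib's integral remainder is for the Taylor polynomial within `[a, x]`, which agrees
  -- with `[a, b]` near `a`.
  have hT : taylorWithinEval f n (Icc a b) a = taylorWithinEval f n (uIcc a x) a := by
    rw [uIcc_of_le hax.le]; exact taylorWithinEval_congr_set (Icc_eventuallyEq_Icc_left hab hax) n
  have hD : ∀ t ∈ Ioo a x, ‖((x - t) ^ n / n !) • iteratedDerivWithin (n + 1) f (Icc a x) t‖ₑ ≤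
      ENNReal.ofReal ((b - a) ^ n / n !) * ‖iteratedDerivWithin (n + 1) f (Icc a b) t‖ₑ := by
    intro t ht
    have hset : Icc a x =ᶠ[𝓝 t] Icc a b := (eventuallyEq_univ.2 (Icc_mem_nhds ht.1 ht.2)).trans
      (eventuallyEq_univ.2 (Icc_mem_nhds ht.1 (ht.2.trans_le hx.2))).symm
    rw [iteratedDerivWithin_congr_set hset, enorm_smul, ← ofReal_norm]
    gcongr
    rw [Real.norm_of_nonneg (by have := ht.2.le; positivity)]
    gcongr <;> linarith [ht.1, ht.2, hx.2]
  rw [hT, taylor_integral_remainder (hf.mono hsub), uIcc_of_le hax.le,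
    intervalIntegral.integral_of_le hax.le, integral_Ioc_eq_integral_Ioo,
    eLpNorm_one_eq_lintegral_enorm, ← lintegral_const_mul' _ _ ofReal_ne_top]
  calc _ ≤ ∫⁻ t in Ioo a x, ‖((x - t) ^ n / n !) • iteratedDerivWithin (n + 1) f (Icc a x) t‖ₑ :=
        enorm_integral_le_lintegral_enorm _
    _ ≤ ∫⁻ t in Ioo a x, ENNReal.ofReal ((b - a) ^ n / n !) *
          ‖iteratedDerivWithin (n + 1) f (Icc a b) t‖ₑ := setLIntegral_mono' measurableSet_Ioo hD
    _ ≤ _ := lintegral_mono_set (Ioo_subset_Ioo_right hx.2)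

theorem eLpNorm_top_sub_taylorWithinEval_le {f : ℝ → E} {a b : ℝ} {n : ℕ}
    (hf : ContDiffOn ℝ (n + 1) f (Icc a b)) :
    eLpNorm (f - taylorWithinEval f n (Icc a b) a) ∞ (volume.restrict (Ioo a b)) ≤
      ENNReal.ofReal ((b - a) ^ n / n !) *
        eLpNorm (iteratedDerivWithin (n + 1) f (Icc a b)) 1 (volume.restrict (Ioo a b)) := by
  rw [eLpNorm_exponent_top]
  refine eLpNormEssSup_le_of_ae_enorm_bound ?_
  filter_upwards [ae_restrict_mem measurableSet_Ioo] with x hx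
  exact enorm_sub_taylorWithinEval_le hf (Ioo_subset_Icc_self hx)

end Taylor

section Lp

theorem eLpNorm_le_mul_measure_univ_mul_of_eLpNorm_top_le {α F G : Type*} [MeasurableSpace α]
    {μ : Measure α} [NormedAddCommGroup F] [NormedAddCommGroup G] {E : α → F} {D : α → G}
    {r c : ℝ≥0∞} (hr : 1 ≤ r) (hD : AEStronglyMeasurable D μ)
    (h : eLpNorm E ∞ μ ≤ c * eLpNorm D 1 μ) :
    eLpNorm E r μ ≤ c * μ univ * eLpNorm D r μ := by
  have hE : eLpNorm E r μ ≤ eLpNorm E ∞ μ * μ univ ^ r.toReal⁻¹ := by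
    simpa [eLpNorm_exponent_top] using
      eLpNorm_le_of_ae_enorm_bound (p := r) (enorm_ae_le_eLpNormEssSup E μ)
  have hD1 : eLpNorm D 1 μ ≤ eLpNorm D r μ * μ univ ^ (1 - r.toReal⁻¹) := by
    simpa using eLpNorm_le_eLpNorm_mul_rpow_measure_univ hr hD
  have hexp : r.toReal⁻¹ ≤ 1 := by
    rcases eq_or_ne r ∞ with rfl | hr_top
    · simp
    · exact inv_le_one_of_one_le₀ (by simpa using ENNReal.toReal_mono hr_top hr)
  calc eLpNorm E r μ ≤ c * (eLpNorm D r μ * μ univ ^ (1 - r.toReal⁻¹)) * μ univ ^ r.toReal⁻¹ :=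
        hE.trans (by gcongr; exact h.trans (by gcongr))
    _ = c * μ univ * eLpNorm D r μ := by
        rw [mul_assoc, mul_assoc, ← ENNReal.rpow_add_of_nonneg _ _ (sub_nonneg.2 hexp)
          (by positivity), sub_add_cancel, rpow_one]
        ring

theorem eLpNorm_top_intervalIntegral_le {E : Type*} [NormedAddCommGroup E] [NormedSpace ℝ E]
    (g : ℝ → E) (a b : ℝ) :
    eLpNorm (fun u => ∫ σ in a..u, g σ) ∞ (volume.restrict (Ioo a b)) ≤
      ENNReal.ofReal (b - a) * eLpNorm g ∞ (volume.restrict (Ioo a b)) := by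
  have hL1 : eLpNorm g 1 (volume.restrict (Ioo a b)) ≤
      ENNReal.ofReal (b - a) * eLpNorm g ∞ (volume.restrict (Ioo a b)) := by
    simpa [eLpNorm_exponent_top, mul_comm] using
      eLpNorm_le_of_ae_enorm_bound (p := 1)
        (enorm_ae_le_eLpNormEssSup g (volume.restrict (Ioo a b)))
  refine le_trans ?_ hL1
  rw [eLpNorm_exponent_top, eLpNorm_one_eq_lintegral_enorm]
  refine eLpNormEssSup_le_of_ae_enorm_bound ?_
  filter_upwards [ae_restrict_mem measurableSet_Ioo] with u hu
  rw [intervalIntegral.integral_of_le hu.1.le, integral_Ioc_eq_integral_Ioo]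
  exact (enorm_integral_le_lintegral_enorm _).trans
    (lintegral_mono_set (Ioo_subset_Ioo_right hu.2.le))

end Lp

section StableProjection

variable {H : Type*} [NormedAddCommGroup H] [NormedSpace ℝ H] {a b C_Q : ℝ} {q : ℕ}
  {Q : (ℝ → H) → ℝ → H}

theorem eLpNorm_top_sub_apply_le_of_isPolyDegLT
    (hQadd : ∀ f g : ℝ → H, ContinuousOn f (Icc a b) → ContinuousOn g (Icc a b) →
      ∀ u ∈ Icc a b, Q (f + g) u = Q f u + Q g u)
    (hQpoly : ∀ pf : ℝ → H, IsPolyDegLT H q pf → ∀ u ∈ Icc a b, Q pf u = pf u)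
    (hQstab : ∀ g : ℝ → H, ContinuousOn g (Icc a b) →
      eLpNorm (Q g) ⊤ (volume.restrict (Ioo a b)) ≤
        ENNReal.ofReal C_Q * eLpNorm g ⊤ (volume.restrict (Ioo a b)))
    {w p : ℝ → H} (hw : ContinuousOn w (Icc a b)) (hp : IsPolyDegLT H q p) :
    eLpNorm (w - Q w) ∞ (volume.restrict (Ioo a b)) ≤
      (1 + ENNReal.ofReal C_Q) * eLpNorm (w - p) ∞ (volume.restrict (Ioo a b)) := by
  have hpc : ContinuousOn p (Icc a b) := hp.continuous.continuousOn
  have hwp : ContinuousOn (w - p) (Icc a b) := hw.sub hpc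
  have hsplit : w - Q w =ᵐ[volume.restrict (Ioo a b)] (w - p) + -Q (w - p) := by
    filter_upwards [ae_restrict_mem measurableSet_Ioo] with u hu
    have hQw := hQadd (w - p) p hwp hpc u (Ioo_subset_Icc_self hu)
    rw [sub_add_cancel, hQpoly p hp u (Ioo_subset_Icc_self hu)] at hQw
    simp only [Pi.sub_apply, Pi.add_apply, Pi.neg_apply, hQw]
    abel
  rw [eLpNorm_congr_ae hsplit, eLpNorm_exponent_top]
  calc _ ≤ eLpNormEssSup (w - p) (volume.restrict (Ioo a b)) +
        eLpNormEssSup (-Q (w - p)) (volume.restrict (Ioo a b)) := eLpNormEssSup_add_le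
    _ = eLpNorm (w - p) ∞ (volume.restrict (Ioo a b)) +
        eLpNorm (Q (w - p)) ∞ (volume.restrict (Ioo a b)) := by
        rw [← eLpNorm_neg (Q _), eLpNorm_exponent_top, eLpNorm_exponent_top]
    _ ≤ eLpNorm (w - p) ∞ (volume.restrict (Ioo a b)) +
        ENNReal.ofReal C_Q * eLpNorm (w - p) ∞ (volume.restrict (Ioo a b)) := by
        gcongr; exact hQstab _ hwp
    _ = _ := by ring

theorem eLpNorm_top_sub_apply_le_of_contDiffOn [CompleteSpace H] {n : ℕ} (hn : n < q)
    (hQadd : ∀ f g : ℝ → H, ContinuousOn f (Icc a b) → ContinuousOn g (Icc a b) →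
      ∀ u ∈ Icc a b, Q (f + g) u = Q f u + Q g u)
    (hQpoly : ∀ pf : ℝ → H, IsPolyDegLT H q pf → ∀ u ∈ Icc a b, Q pf u = pf u)
    (hQstab : ∀ g : ℝ → H, ContinuousOn g (Icc a b) →
      eLpNorm (Q g) ⊤ (volume.restrict (Ioo a b)) ≤
        ENNReal.ofReal C_Q * eLpNorm g ⊤ (volume.restrict (Ioo a b)))
    {w : ℝ → H} (hw : ContDiffOn ℝ (n + 1) w (Icc a b)) :
    eLpNorm (w - Q w) ∞ (volume.restrict (Ioo a b)) ≤
      (1 + ENNReal.ofReal C_Q) * ENNReal.ofReal ((b - a) ^ n / n !) *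
        eLpNorm (iteratedDerivWithin (n + 1) w (Icc a b)) 1 (volume.restrict (Ioo a b)) := by
  calc _ ≤ (1 + ENNReal.ofReal C_Q) *
        eLpNorm (w - taylorWithinEval w n (Icc a b) a) ∞ (volume.restrict (Ioo a b)) :=
        eLpNorm_top_sub_apply_le_of_isPolyDegLT hQadd hQpoly hQstab hw.continuousOn
          (isPolyDegLT_taylorWithinEval hn _ _ _)
    _ ≤ _ := by
        rw [mul_assoc]
        gcongr
        exact eLpNorm_top_sub_taylorWithinEval_le hw

end StableProjection

section Walkington

variable {H : Type*} [NormedAddCommGroup H] [NormedSpace ℝ H] [CompleteSpace H] {a b C_Q : ℝ}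
  {q : ℕ} {Q : (ℝ → H) → ℝ → H} {v : ℝ → H}

noncomputable def walkingtonProj (Q : (ℝ → H) → ℝ → H) (a b : ℝ) (v : ℝ → H) : ℝ → H :=
  fun u => v a + ∫ σ in a..u, Q (derivWithin v (Icc a b)) σ

theorem hasDerivAt_walkingtonProj (hQv : ContinuousOn (Q (derivWithin v (Icc a b))) (Icc a b))
    {u : ℝ} (hu : u ∈ Ioo a b) :
    HasDerivAt (walkingtonProj Q a b v) (Q (derivWithin v (Icc a b)) u) u := by
  refine (intervalIntegral.integral_hasDerivAt_right ?_ ?_ ?_).const_add _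
  · exact (hQv.mono (uIcc_subset_Icc ⟨le_rfl, hu.1.le.trans hu.2.le⟩
      (Ioo_subset_Icc_self hu))).intervalIntegrable
  · exact (hQv.mono Ioo_subset_Icc_self).stronglyMeasurableAtFilter isOpen_Ioo u hu
  · exact hQv.continuousAt (Icc_mem_nhds hu.1 hu.2)

theorem sub_walkingtonProj_eq_integral (hab : a < b) (hv : ContDiffOn ℝ 1 v (Icc a b))
    (hQv : ContinuousOn (Q (derivWithin v (Icc a b))) (Icc a b)) {u : ℝ} (hu : u ∈ Icc a b) :
    v u - walkingtonProj Q a b v u =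
      ∫ σ in a..u, (derivWithin v (Icc a b) - Q (derivWithin v (Icc a b))) σ := by
  have hsub : uIcc a u ⊆ Icc a b := uIcc_subset_Icc (left_mem_Icc.2 hab.le) hu
  have hw : ContinuousOn (derivWithin v (Icc a b)) (Icc a b) :=
    hv.continuousOn_derivWithin (uniqueDiffOn_Icc hab) le_rfl
  have hFTC : ∫ σ in a..u, derivWithin v (Icc a b) σ = v u - v a := by
    refine intervalIntegral.integral_eq_sub_of_hasDerivAt_of_le hu.1
      (hv.continuousOn.mono (Icc_subset_Icc_right hu.2)) (fun t ht => ?_)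
      ((hw.mono hsub).intervalIntegrable)
    exact ((hv.differentiableOn one_ne_zero t (Ioo_subset_Icc_self ⟨ht.1, ht.2.trans_le hu.2⟩))
      |>.hasDerivWithinAt.hasDerivAt (Icc_mem_nhds ht.1 (ht.2.trans_le hu.2)))
  rw [Pi.sub_def, intervalIntegral.integral_sub (hw.mono hsub).intervalIntegrable
    (hQv.mono hsub).intervalIntegrable, hFTC, walkingtonProj]
  abel

theorem deriv_walkingtonProj (hQv : ContinuousOn (Q (derivWithin v (Icc a b))) (Icc a b)) :
    EqOn (deriv (walkingtonProj Q a b v)) (Q (derivWithin v (Icc a b))) (Ioo a b) :=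
  fun _ hu => (hasDerivAt_walkingtonProj hQv hu).deriv

theorem eLpNorm_top_sub_walkingtonProj_le (hab : a < b) (hv : ContDiffOn ℝ 1 v (Icc a b))
    (hQv : ContinuousOn (Q (derivWithin v (Icc a b))) (Icc a b)) :
    eLpNorm (v - walkingtonProj Q a b v) ∞ (volume.restrict (Ioo a b)) ≤
      ENNReal.ofReal (b - a) * eLpNorm (derivWithin v (Icc a b) - Q (derivWithin v (Icc a b))) ∞
        (volume.restrict (Ioo a b)) := by
  refine (le_of_eq (eLpNorm_congr_ae ?_)).trans (eLpNorm_top_intervalIntegral_le _ a b)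
  exact ae_restrict_of_forall_mem measurableSet_Ioo fun u hu =>
    sub_walkingtonProj_eq_integral hab hv hQv (Ioo_subset_Icc_self hu)

theorem eLpNorm_top_walkingtonProj_errors_le {n : ℕ} (hab : a < b) (hn : n < q)
    (hQadd : ∀ f g : ℝ → H, ContinuousOn f (Icc a b) → ContinuousOn g (Icc a b) →
      ∀ u ∈ Icc a b, Q (f + g) u = Q f u + Q g u)
    (hQrange : ∀ f : ℝ → H, ContinuousOn f (Icc a b) →
      ∃ pf : ℝ → H, IsPolyDegLT H q pf ∧ ∀ u ∈ Icc a b, Q f u = pf u)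
    (hQpoly : ∀ pf : ℝ → H, IsPolyDegLT H q pf → ∀ u ∈ Icc a b, Q pf u = pf u)
    (hQstab : ∀ g : ℝ → H, ContinuousOn g (Icc a b) →
      eLpNorm (Q g) ⊤ (volume.restrict (Ioo a b)) ≤
        ENNReal.ofReal C_Q * eLpNorm g ⊤ (volume.restrict (Ioo a b)))
    (hv : ContDiffOn ℝ (n + 2) v (Icc a b)) :
    eLpNorm (v - walkingtonProj Q a b v) ∞ (volume.restrict (Ioo a b)) ≤
        ENNReal.ofReal (b - a) * ((1 + ENNReal.ofReal C_Q) * ENNReal.ofReal ((b - a) ^ n / n !)) *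
          eLpNorm (iteratedDerivWithin (n + 2) v (Icc a b)) 1 (volume.restrict (Ioo a b)) ∧
      eLpNorm (derivWithin v (Icc a b) - deriv (walkingtonProj Q a b v)) ∞
          (volume.restrict (Ioo a b)) ≤
        (1 + ENNReal.ofReal C_Q) * ENNReal.ofReal ((b - a) ^ n / n !) *
          eLpNorm (iteratedDerivWithin (n + 2) v (Icc a b)) 1 (volume.restrict (Ioo a b)) := by
  set w := derivWithin v (Icc a b)
  have hw : ContDiffOn ℝ (n + 1) w (Icc a b) := hv.derivWithin (uniqueDiffOn_Icc hab) le_rfl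
  obtain ⟨pw, hpw, hQpw⟩ := hQrange w hw.continuousOn
  have hQw : ContinuousOn (Q w) (Icc a b) := hpw.continuous.continuousOn.congr hQpw
  have hderiv := eLpNorm_top_sub_apply_le_of_contDiffOn hn hQadd hQpoly hQstab hw
  rw [← iteratedDerivWithin_succ'] at hderiv
  have herr : w - deriv (walkingtonProj Q a b v) =ᵐ[volume.restrict (Ioo a b)] w - Q w :=
    ae_restrict_of_forall_mem measurableSet_Ioo fun u hu =>
      congrArg (w u - ·) (deriv_walkingtonProj hQw hu)
  refine ⟨?_, (eLpNorm_congr_ae herr).trans_le hderiv⟩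
  rw [mul_assoc]
  exact (eLpNorm_top_sub_walkingtonProj_le hab (hv.of_le (by norm_cast; omega)) hQw).trans
    (by gcongr)

end Walkington

theorem walkington_projection_estimates_general (q s : ℕ) (hs1 : 2 ≤ s)
    (hs2 : s ≤ q + 1) (C_Q : ℝ) (hCQ : 0 < C_Q)
    (H : Type*) [NormedAddCommGroup H] [InnerProductSpace ℝ H] [CompleteSpace H] :
    ∃ C : ℝ, 0 < C ∧
      ∀ (a b τ : ℝ), a < b → τ = b - a →
        ∀ r : ℝ≥0∞, 1 ≤ r →
          ∀ Q : (ℝ → H) → (ℝ → H),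
            (∀ f g : ℝ → H, ContinuousOn f (Icc a b) → ContinuousOn g (Icc a b) →
              ∀ u ∈ Icc a b, Q (f + g) u = Q f u + Q g u) →
            (∀ (c : ℝ) (f : ℝ → H), ContinuousOn f (Icc a b) →
              ∀ u ∈ Icc a b, Q (c • f) u = c • Q f u) →
            (∀ f : ℝ → H, ContinuousOn f (Icc a b) →
              ∃ pf : ℝ → H, IsPolyDegLT H q pf ∧ ∀ u ∈ Icc a b, Q f u = pf u) →
            (∀ pf : ℝ → H, IsPolyDegLT H q pf → ∀ u ∈ Icc a b, Q pf u = pf u) →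
            (∀ g : ℝ → H, ContinuousOn g (Icc a b) →
              eLpNorm (Q g) ⊤ (volume.restrict (Ioo a b)) ≤
                ENNReal.ofReal C_Q * eLpNorm g ⊤ (volume.restrict (Ioo a b))) →
            ∀ v : ℝ → H, ContDiffOn ℝ s v (Icc a b) →
              eLpNorm
                  (fun u => v u - (v a + ∫ σ in a..u, Q (derivWithin v (Icc a b)) σ)) r
                  (volume.restrict (Ioo a b)) ≤
                ENNReal.ofReal (C * τ ^ s) *
                  eLpNorm (iteratedDerivWithin s v (Icc a b)) r (volume.restrict (Ioo a b))
              ∧ eLpNorm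
                  (fun u => derivWithin v (Icc a b) u -
                    deriv (fun x => v a + ∫ σ in a..x, Q (derivWithin v (Icc a b)) σ) u) r
                  (volume.restrict (Ioo a b)) ≤
                ENNReal.ofReal (C * τ ^ (s - 1)) *
                  eLpNorm (iteratedDerivWithin s v (Icc a b)) r (volume.restrict (Ioo a b)) := by
  obtain ⟨n, rfl⟩ : ∃ n, s = n + 2 := ⟨s - 2, by omega⟩
  refine ⟨(1 + C_Q) / n !, by positivity, ?_⟩
  rintro a b τ hab rfl r hr Q hQadd - hQrange hQpoly hQstab v hv
  obtain ⟨hvalue, hderiv⟩ :=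
    eLpNorm_top_walkingtonProj_errors_le hab (by omega) hQadd hQrange hQpoly hQstab hv
  have hD : AEStronglyMeasurable (iteratedDerivWithin (n + 2) v (Icc a b))
      (volume.restrict (Ioo a b)) :=
    ((hv.continuousOn_iteratedDerivWithin le_rfl (uniqueDiffOn_Icc hab)).mono
      Ioo_subset_Icc_self).aestronglyMeasurable measurableSet_Ioo
  have hμ : volume.restrict (Ioo a b) univ = ENNReal.ofReal (b - a) := by simp
  have hC : ∀ k, ENNReal.ofReal ((1 + C_Q) / n ! * (b - a) ^ (n + k)) =
      (1 + ENNReal.ofReal C_Q) * ENNReal.ofReal ((b - a) ^ n / n !) *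
        ENNReal.ofReal (b - a) ^ k := by
    have hτ : 0 < b - a := sub_pos.2 hab
    intro k
    rw [← ofReal_pow hτ.le, ← ofReal_one, ← ofReal_add zero_le_one hCQ.le,
      ← ofReal_mul (by positivity), ← ofReal_mul (by positivity)]
    congr 1
    ring
  constructor
  · refine (eLpNorm_le_mul_measure_univ_mul_of_eLpNorm_top_le hr hD hvalue).trans_eq ?_
    rw [hC 2, hμ]
    ring
  · refine (eLpNorm_le_mul_measure_univ_mul_of_eLpNorm_top_le hr hD hderiv).trans_eq ?_
    rw [show n + 2 - 1 = n + 1 from rfl, hC 1, hμ]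
    ring

/-- **Estimates for the Walkington projection.** Let `2 ≤ s ≤ q + 1`. There exists `C > 0`
depending only on `q`, `s`, `C_Q` such that: for every interval `(a,b)` with `τ = b − a`,
every `r ∈ [1,∞]`, every linear operator `Q` into polynomials of degree at most `q − 1` that
reproduces such polynomials on `[a,b]` and is `L^∞`-stable with constant `C_Q`, and every
`s`-times continuously differentiable `v`, the Walkington projection
`Pv(t) = v(a) + ∫_a^t (Qv')(σ) dσ` satisfies
`‖v − Pv‖_{L^r((a,b);H)} ≤ C τ^s ‖v^{(s)}‖_{L^r((a,b);H)}` and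
`‖v' − (Pv)'‖_{L^r((a,b);H)} ≤ C τ^{s−1} ‖v^{(s)}‖_{L^r((a,b);H)}`. -/
theorem walkington_projection_estimates (q s : ℕ) (hq : 2 ≤ q) (hs1 : 2 ≤ s)
    (hs2 : s ≤ q + 1) (C_Q : ℝ) (hCQ : 0 < C_Q)
    (H : Type*) [NormedAddCommGroup H] [InnerProductSpace ℝ H] [CompleteSpace H] :
    ∃ C : ℝ, 0 < C ∧
      ∀ (a b τ : ℝ), a < b → τ = b - a →
        ∀ r : ℝ≥0∞, 1 ≤ r →
          ∀ Q : (ℝ → H) → (ℝ → H),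
            (∀ f g : ℝ → H, ContinuousOn f (Icc a b) → ContinuousOn g (Icc a b) →
              ∀ u ∈ Icc a b, Q (f + g) u = Q f u + Q g u) →
            (∀ (c : ℝ) (f : ℝ → H), ContinuousOn f (Icc a b) →
              ∀ u ∈ Icc a b, Q (c • f) u = c • Q f u) →
            (∀ f : ℝ → H, ContinuousOn f (Icc a b) →
              ∃ pf : ℝ → H, IsPolyDegLT H q pf ∧ ∀ u ∈ Icc a b, Q f u = pf u) →
            (∀ pf : ℝ → H, IsPolyDegLT H q pf → ∀ u ∈ Icc a b, Q pf u = pf u) →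
            (∀ g : ℝ → H, ContinuousOn g (Icc a b) →
              eLpNorm (Q g) ⊤ (volume.restrict (Ioo a b)) ≤
                ENNReal.ofReal C_Q * eLpNorm g ⊤ (volume.restrict (Ioo a b))) →
            ∀ v : ℝ → H, ContDiffOn ℝ s v (Icc a b) →
              eLpNorm
                  (fun u => v u - (v a + ∫ σ in a..u, Q (derivWithin v (Icc a b)) σ)) r
                  (volume.restrict (Ioo a b)) ≤
                ENNReal.ofReal (C * τ ^ s) *
                  eLpNorm (iteratedDerivWithin s v (Icc a b)) r (volume.restrict (Ioo a b))
              ∧ eLpNorm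
                  (fun u => derivWithin v (Icc a b) u -
                    deriv (fun x => v a + ∫ σ in a..x, Q (derivWithin v (Icc a b)) σ) u) r
                  (volume.restrict (Ioo a b)) ≤
                ENNReal.ofReal (C * τ ^ (s - 1)) *
                  eLpNorm (iteratedDerivWithin s v (Icc a b)) r (volume.restrict (Ioo a b)) :=
  walkington_projection_estimates_general q s hs1 hs2 C_Q hCQ H
end
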